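/- If f : G → H is a surjective group homomorphism between finite groups and A is an implication-based fuzzy subgroup of G with threshold λ, then the image B defined by B(y) = max over x ∈ f⁻¹(y) of A(x) is an implication-based fuzzy subgroup of H with threshold λ. -/

import Mathlib

theorem le_sSup_image_fiber {α β γ : Type*} [Finite α] [ConditionallyCompleteLattice γ]
    (f : α → β) (A : α → γ) (x : α) : A x ≤ sSup (A '' (f ⁻¹' {f x})) :=
  le_csSup (Set.toFinite _).bddAbove ⟨x, rfl, rfl⟩

theorem exists_apply_eq_sSup_image_fiber {α β γ : Type*} [Finite α]
    [ConditionallyCompleteLinearOrder γ] (f : α → β) (A : α → γ) {u : β} (hu : ∃ x, f x = u) :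
    ∃ x, f x = u ∧ A x = sSup (A '' (f ⁻¹' {u})) := by
  obtain ⟨x, hx⟩ := hu
  have hne : (A '' (f ⁻¹' {u})).Nonempty := ⟨A x, x, hx, rfl⟩
  obtain ⟨z, hz, hAz⟩ := hne.csSup_mem (Set.toFinite _)
  exact ⟨z, hz, hAz⟩

theorem ib_fuzzy_subgroup_image_general
    {G H : Type*} [Group G] [Group H] [Fintype G]
    (f : G →* H) (hf : Function.Surjective f)
    (A : G → ℝ) (lam : ℝ)
    (hmul : ∀ x y : G, min 1 (1 - min (A x) (A y) + A (x * y)) ≥ lam)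
    (hinv : ∀ x : G, min 1 (1 - A x + A x⁻¹) ≥ lam)
    (B : H → ℝ) (hBdef : ∀ u : H, B u = sSup (A '' (f ⁻¹' {u}))) :
    (∀ u v : H, min 1 (1 - min (B u) (B v) + B (u * v)) ≥ lam) ∧
    (∀ u : H, min 1 (1 - B u + B u⁻¹) ≥ lam) := by
  have hB_attained : ∀ u, ∃ x, f x = u ∧ A x = B u := fun u => by
    simpa only [hBdef] using exists_apply_eq_sSup_image_fiber f A (hf u)
  have hA_le_B : ∀ x, A x ≤ B (f x) := fun x => (hBdef _).symm ▸ le_sSup_image_fiber f A x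
  refine ⟨fun u v => ?_, fun u => ?_⟩
  · obtain ⟨x, rfl, hx⟩ := hB_attained u
    obtain ⟨y, rfl, hy⟩ := hB_attained v
    have hxy := hA_le_B (x * y)
    rw [map_mul] at hxy
    refine (hmul x y).trans (min_le_min_left 1 ?_)
    rw [hx, hy]
    linarith
  · obtain ⟨x, rfl, hx⟩ := hB_attained u
    have hx_inv := hA_le_B x⁻¹
    rw [map_inv] at hx_inv
    refine (hinv x).trans (min_le_min_left 1 ?_)
    rw [hx]
    linarith

theorem ib_fuzzy_subgroup_image
    {G H : Type*} [Group G] [Group H] [Fintype G] [Fintype H]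
    (f : G →* H) (hf : Function.Surjective f)
    (A : G → ℝ) (lam : ℝ)
    (hA : ∀ x, A x ∈ Set.Icc (0:ℝ) 1) (hlam : lam ∈ Set.Ioc (0:ℝ) 1)
    (hmul : ∀ x y : G, min 1 (1 - min (A x) (A y) + A (x * y)) ≥ lam)
    (hinv : ∀ x : G, min 1 (1 - A x + A x⁻¹) ≥ lam)
    (B : H → ℝ) (hBdef : ∀ u : H, B u = sSup (A '' (f ⁻¹' {u}))) :
    (∀ u v : H, min 1 (1 - min (B u) (B v) + B (u * v)) ≥ lam) ∧
    (∀ u : H, min 1 (1 - B u + B u⁻¹) ≥ lam) :=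
  ib_fuzzy_subgroup_image_general f hf A lam hmul hinv B hBdef
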